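/- If p(z) is a complex polynomial of degree n with all its zeros in |z| < k where k ≤ 1, then max_{|z|=1} |p'(z)| ≥ (n/(1+k)) · max_{|z|=1} |p(z)|. -/

import Mathlib

/-!
At a point `z` of the unit circle that is not a root of `p`,
`z p'(z) / p(z) = ∑ z / (z - r) = ∑ (1 - r / z)⁻¹`, the sums running over the roots `r`.
For `‖w‖ ≤ 1` the real part of `(1 - w)⁻¹` is at least `1 / (1 + ‖w‖)`, so each summand has real
part at least `1 / (1 + k)`, whence `‖p'(z)‖ ≥ n / (1 + k) ‖p(z)‖`. Taking `z` where `‖p‖`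
attains its maximum on the circle gives the theorem.
-/

open Polynomial

noncomputable def maxMod (p : Polynomial ℂ) (c : ℝ) : ℝ :=
  sSup ((fun z => ‖p.eval z‖) '' {z : ℂ | ‖z‖ = c})

noncomputable def minMod (p : Polynomial ℂ) (c : ℝ) : ℝ :=
  sInf ((fun z => ‖p.eval z‖) '' {z : ℂ | ‖z‖ = c})

noncomputable def polarDeriv (p : Polynomial ℂ) (α : ℂ) : Polynomial ℂ :=
  C (p.natDegree : ℂ) * p + (C α - X) * derivative p

lemma one_div_one_add_norm_le_re_inv_one_sub {w : ℂ} (hw : ‖w‖ ≤ 1) (hw1 : w ≠ 1) :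
    1 / (1 + ‖w‖) ≤ (1 - w)⁻¹.re := by
  have hpos : 0 < Complex.normSq (1 - w) := Complex.normSq_pos.2 (sub_ne_zero.2 hw1.symm)
  have hnormSq : Complex.normSq (1 - w) = 1 - 2 * w.re + ‖w‖ ^ 2 := by
    rw [Complex.normSq_sub, Complex.normSq_eq_norm_sq w]
    simp only [map_one, one_mul, Complex.conj_re]
    ring
  have hre : -‖w‖ ≤ w.re := (abs_le.1 (Complex.abs_re_le_norm w)).1
  rw [hnormSq] at hpos
  rw [Complex.inv_re, Complex.sub_re, Complex.one_re, hnormSq,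
    div_le_div_iff₀ (by positivity) hpos]
  -- `(1 + ‖w‖) (1 - re w) - ‖1 - w‖² = (re w + ‖w‖) (1 - ‖w‖)`
  nlinarith [mul_nonneg (neg_le_iff_add_nonneg.1 hre) (sub_nonneg.2 hw)]

theorem natDegree_div_mul_norm_eval_le_norm_eval_derivative {p : ℂ[X]} {k : ℝ} (hk : k ≤ 1)
    (hroots : ∀ r ∈ p.roots, ‖r‖ ≤ k) {z : ℂ} (hz : ‖z‖ = 1) :
    p.natDegree / (1 + k) * ‖p.eval z‖ ≤ ‖p.derivative.eval z‖ := by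
  rcases eq_or_ne (p.eval z) 0 with hpz | hpz
  · simp [hpz]
  have hz0 : z ≠ 0 := norm_ne_zero_iff.1 (by simp [hz])
  have hsum : z * (p.derivative.eval z / p.eval z) =
      (p.roots.map fun r => (1 - r / z)⁻¹).sum := by
    rw [(IsAlgClosed.splits p).eval_derivative_div_eval_of_ne_zero hpz,
      ← Multiset.sum_map_mul_left]
    refine congrArg Multiset.sum (Multiset.map_congr rfl fun r hr => ?_)
    have hzr : z - r ≠ 0 := sub_ne_zero.2 fun h => hpz (h ▸ isRoot_of_mem_roots hr)
    field_simp
  have hre : p.natDegree / (1 + k) ≤ (z * (p.derivative.eval z / p.eval z)).re := by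
    rw [hsum, ← Complex.coe_reAddGroupHom, map_multiset_sum, Multiset.map_map,
      (IsAlgClosed.splits p).natDegree_eq_card_roots,
      ← Multiset.card_map (Complex.reAddGroupHom ∘ _), div_eq_mul_one_div, ← nsmul_eq_mul]
    refine Multiset.card_nsmul_le_sum fun x hx => ?_
    obtain ⟨r, hr, rfl⟩ := Multiset.mem_map.1 hx
    have hrz : ‖r / z‖ = ‖r‖ := by rw [norm_div, hz, div_one]
    have hrz1 : r / z ≠ 1 :=
      fun h => hpz ((div_eq_one_iff_eq hz0).1 h ▸ isRoot_of_mem_roots hr)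
    calc 1 / (1 + k) ≤ 1 / (1 + ‖r / z‖) :=
          one_div_le_one_div_of_le (by positivity) (by rw [hrz]; linarith [hroots r hr])
      _ ≤ _ := one_div_one_add_norm_le_re_inv_one_sub (hrz ▸ (hroots r hr).trans hk) hrz1
  calc p.natDegree / (1 + k) * ‖p.eval z‖
      ≤ ‖z * (p.derivative.eval z / p.eval z)‖ * ‖p.eval z‖ := by
        gcongr; exact hre.trans (Complex.re_le_norm _)
    _ = ‖p.derivative.eval z‖ := by
        rw [norm_mul, hz, one_mul, norm_div, div_mul_cancel₀ _ (norm_ne_zero_iff.2 hpz)]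

lemma maxMod_eq_sSup_image_sphere (p : ℂ[X]) (c : ℝ) :
    maxMod p c = sSup ((fun z => ‖p.eval z‖) '' Metric.sphere 0 c) := by
  simp only [maxMod, Metric.sphere, dist_zero_right]

lemma exists_norm_eq_maxMod (p : ℂ[X]) {c : ℝ} (hc : 0 ≤ c) :
    ∃ z : ℂ, ‖z‖ = c ∧ ‖p.eval z‖ = maxMod p c := by
  rw [maxMod_eq_sSup_image_sphere]
  obtain ⟨z, hz, hmax⟩ := ((isCompact_sphere 0 c).image p.continuous.norm).sSup_mem
    ((NormedSpace.sphere_nonempty.2 hc).image _)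
  exact ⟨z, mem_sphere_zero_iff_norm.1 hz, hmax⟩

lemma norm_eval_le_maxMod (p : ℂ[X]) (z : ℂ) : ‖p.eval z‖ ≤ maxMod p ‖z‖ := by
  rw [maxMod_eq_sSup_image_sphere]
  exact le_csSup ((isCompact_sphere 0 _).image p.continuous.norm).bddAbove ⟨z, by simp, rfl⟩

theorem stmt3_general (p : Polynomial ℂ) (n : ℕ) (hn : p.natDegree = n) (k : ℝ)
    (hk : k ≤ 1)
    (hz : ∀ z : ℂ, p.IsRoot z → ‖z‖ < k) :
    (n / (1 + k)) * maxMod p 1 ≤ maxMod (derivative p) 1 := by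
  obtain ⟨z, hz1, hmax⟩ := exists_norm_eq_maxMod p zero_le_one
  calc n / (1 + k) * maxMod p 1 = p.natDegree / (1 + k) * ‖p.eval z‖ := by rw [hmax, hn]
    _ ≤ ‖p.derivative.eval z‖ := natDegree_div_mul_norm_eval_le_norm_eval_derivative hk
          (fun r hr => (hz r (isRoot_of_mem_roots hr)).le) hz1
    _ ≤ maxMod (derivative p) 1 := hz1 ▸ norm_eval_le_maxMod _ z

theorem stmt3 (p : Polynomial ℂ) (n : ℕ) (hn : p.natDegree = n) (k : ℝ)
    (hk0 : 0 < k) (hk : k ≤ 1)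
    (hz : ∀ z : ℂ, p.IsRoot z → ‖z‖ < k) :
    (n / (1 + k)) * maxMod p 1 ≤ maxMod (derivative p) 1 :=
  stmt3_general p n hn k hk hz
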